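/- arXiv:2412.11628 — 3 statements merged into one kernel-verified Lean document; each statement's English description precedes it below -/
import Mathlib

section
/- Let g, g' ∈ ℤ^m satisfy g_k = −1, g'_k = 1, and g'_j = g_j − [−b_{jk}]_+ for all j ≠ k (so g'_{k−1} = g_{k−1} − 1, g'_{k+1} = g_{k+1} − 1 and g'_j = g_j for the remaining j ≠ k). Then the following identities hold in R: (a) X(g) + X(g + Be_k) = (X')^{g'}; (b) X(g + Be_k + Be_{k+1}) = (X')^{g' + B'e_{k+1}}; (c) X(g + Be_k + Be_{k−1}) = (X')^{g' + B'e_{k−1}}; (d) X(g + Be_{k−1} + Be_k + Be_{k+1}) = (X')^{g' + B'(e_{k−1} + e_k + e_{k+1})} + (X')^{g' + B'(e_{k−1} + e_{k+1})}. (These are the polynomial properties of the partition bijection between canonical submodules of the string modules τ_{k−1} → τ_k ← τ_{k+1} and τ_{k−1} ← τ'_k → τ_{k+1}, where g and g' play the roles of the indices before and after mutation.) -/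
/-- The `i`-th standard basis vector of `ℤ^m`. -/
def stdE {m : ℕ} (i : Fin m) : Fin m → ℤ := Pi.single i 1

/-- Positive part `[b]_+` of a vector, taken entrywise. -/
def bPlus {m : ℕ} (b : Fin m → ℤ) : Fin m → ℤ := fun j => max (b j) 0

/-- `bMinus b j = [-b_j]_+`. -/
def bMinus {m : ℕ} (b : Fin m → ℤ) : Fin m → ℤ := fun j => max (-(b j)) 0

/-- The `j`-th column of an `m × m` integer matrix, as a vector in `ℤ^m`. -/
def col {m : ℕ} (M : Fin m → Fin m → ℤ) (j : Fin m) : Fin m → ℤ := fun i => M i j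

/-- The normalized monomial
`(X')^a = t^{-Σ_{i<j} a_i a_j Λ'(e_i,e_j)} · (X'_1)^{a_1} ⋯ (X'_m)^{a_m}`
(ordered product), where `Lam' i j` encodes `Λ'(e_i, e_j)`. -/
def XpPow {m : ℕ} {R : Type*} [Ring R] (t : Rˣ) (Lam' : Fin m → Fin m → ℤ)
    (X' : Fin m → Rˣ) (a : Fin m → ℤ) : Rˣ :=
  t ^ (-(∑ i : Fin m, ∑ j : Fin m, if i < j then a i * a j * Lam' i j else 0)) *
    ((List.finRange m).map (fun i => X' i ^ a i)).prod

section Helpers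

variable {m : ℕ} {R : Type*} [Ring R]

lemma tcommU (t : Rˣ) (ht : ∀ r : R, (t : R) * r = r * (t : R)) (n : ℤ) (u : Rˣ) :
    t ^ n * u = u * t ^ n := by
  have h : Commute t u := Units.ext (ht u)
  exact (h.zpow_left n).eq

variable (t : Rˣ) (Λ : (Fin m → ℤ) →ₗ[ℤ] (Fin m → ℤ) →ₗ[ℤ] ℤ) (X : (Fin m → ℤ) → Rˣ)

lemma lamSelf (hΛskew : ∀ g h, Λ g h = -Λ h g) (x : Fin m → ℤ) : Λ x x = 0 := by
  have := hΛskew x x; omega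

lemma XinvAux (hX0 : X 0 = 1) (hXmul : ∀ g h, X g * X h = t ^ (Λ g h) * X (g + h))
    (hΛskew : ∀ g h, Λ g h = -Λ h g) (v : Fin m → ℤ) : X (-v) = (X v)⁻¹ := by
  apply eq_inv_of_mul_eq_one_right
  have := hXmul v (-v)
  rw [add_neg_cancel, hX0] at this
  have h0 : Λ v (-v) = 0 := by
    have := lamSelf Λ hΛskew v
    simp [map_neg, this]
  rw [this, h0, zpow_zero, one_mul]

lemma XzpowAux (hX0 : X 0 = 1) (hXmul : ∀ g h, X g * X h = t ^ (Λ g h) * X (g + h))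
    (hΛskew : ∀ g h, Λ g h = -Λ h g) (v : Fin m → ℤ) (n : ℤ) :
    X v ^ n = X (n • v) := by
  have hnat : ∀ n : ℕ, X v ^ n = X ((n : ℤ) • v) := by
    intro n
    induction n with
    | zero => simpa using hX0.symm
    | succ n ih =>
      rw [pow_succ, ih, hXmul]
      have h0 : Λ ((n : ℤ) • v) v = 0 := by
        rw [map_smul]
        simp [lamSelf Λ hΛskew v]
      rw [h0, zpow_zero, one_mul]
      congr 1
      push_cast
      module
  rcases n with n | n
  · simpa using hnat n
  · rw [zpow_negSucc, hnat (n+1), ← XinvAux t Λ X hX0 hXmul hΛskew, Int.negSucc_eq]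
    congr 1
    push_cast
    module

/-- exponent accumulator for ordered products of monomials -/
def pairS (Λ : (Fin m → ℤ) →ₗ[ℤ] (Fin m → ℤ) →ₗ[ℤ] ℤ) (w : Fin m → Fin m → ℤ) :
    List (Fin m) → ℤ
  | [] => 0
  | i :: l => Λ (w i) ((l.map w).sum) + pairS Λ w l

lemma prodListAux (ht : ∀ r : R, (t : R) * r = r * (t : R))
    (hX0 : X 0 = 1) (hXmul : ∀ g h, X g * X h = t ^ (Λ g h) * X (g + h))
    (w : Fin m → Fin m → ℤ) :
    ∀ l : List (Fin m),
      (l.map (fun i => X (w i))).prod = t ^ (pairS Λ w l) * X ((l.map w).sum) := by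
  intro l
  induction l with
  | nil => simp [pairS, hX0]
  | cons i l ih =>
    rw [List.map_cons, List.prod_cons, ih, ← mul_assoc, ← tcommU t ht, mul_assoc, hXmul,
      List.map_cons, List.sum_cons]
    rw [pairS, ← mul_assoc, ← zpow_add]
    ring_nf

lemma pairS_sorted (w : Fin m → Fin m → ℤ) :
    ∀ l : List (Fin m), l.Pairwise (· < ·) →
      pairS Λ w l = ∑ i ∈ l.toFinset, ∑ j ∈ l.toFinset,
        if i < j then Λ (w i) (w j) else 0 := by
  intro l
  induction l with
  | nil => simp [pairS]
  | cons i l ih =>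
    intro hs
    rw [List.pairwise_cons] at hs
    obtain ⟨hlt, hs⟩ := hs
    have hnd : l.Nodup := hs.nodup
    have hiT : i ∉ l.toFinset := by
      simp only [List.mem_toFinset]
      intro hmem
      exact lt_irrefl i (hlt i hmem)
    rw [pairS, ih hs, List.toFinset_cons, Finset.sum_insert hiT]
    have h1 : Λ (w i) ((l.map w).sum) = ∑ j ∈ l.toFinset, Λ (w i) (w j) := by
      rw [map_list_sum, List.map_map, List.sum_toFinset _ hnd]
      rfl
    have h2 : (∑ j ∈ insert i l.toFinset, if i < j then Λ (w i) (w j) else 0)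
        = ∑ j ∈ l.toFinset, Λ (w i) (w j) := by
      rw [Finset.sum_insert hiT, if_neg (lt_irrefl i)]
      rw [zero_add]
      apply Finset.sum_congr rfl
      intro j hj
      rw [if_pos (hlt j (List.mem_toFinset.mp hj))]
    have h3 : ∀ i' ∈ l.toFinset, (∑ j ∈ insert i l.toFinset, if i' < j then Λ (w i') (w j) else 0)
        = ∑ j ∈ l.toFinset, if i' < j then Λ (w i') (w j) else 0 := by
      intro i' hi'
      rw [Finset.sum_insert hiT, if_neg (lt_asymm (hlt i' (List.mem_toFinset.mp hi')))]
      rw [zero_add]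
    rw [h1, h2, Finset.sum_congr rfl h3]

/-- the tail of `l` after the (first) occurrence of `k` -/
def afterK (k : Fin m) : List (Fin m) → List (Fin m)
  | [] => []
  | i :: l => if i = k then l else afterK k l

lemma afterK_sum (k : Fin m) (w : Fin m → Fin m → ℤ) :
    ∀ l : List (Fin m), l.Pairwise (· < ·) → k ∈ l →
      ((afterK k l).map w).sum = ∑ j ∈ l.toFinset.filter (fun j => k < j), w j := by
  intro l
  induction l with
  | nil => intro _ h; simp at h
  | cons i l ih =>
    intro hs hk
    rw [List.pairwise_cons] at hs
    obtain ⟨hlt, hs⟩ := hs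
    have hnd : l.Nodup := hs.nodup
    rw [List.toFinset_cons]
    by_cases hik : i = k
    · subst hik
      rw [afterK, if_pos rfl]
      rw [Finset.filter_insert, if_neg (lt_irrefl i)]
      rw [Finset.filter_true_of_mem (fun j hj => hlt j (List.mem_toFinset.mp hj))]
      exact (List.sum_toFinset _ hnd).symm
    · have hkl : k ∈ l := by
        rcases List.mem_cons.mp hk with h | h
        · exact absurd h.symm hik
        · exact h
      rw [afterK, if_neg hik]
      rw [Finset.filter_insert, if_neg (by exact lt_asymm (hlt k hkl))]
      exact ih hs hkl

lemma distribK (k : Fin m) (F G₁ G₂ : Fin m → Rˣ)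
    (hG₁ : ∀ i, i ≠ k → G₁ i = F i) (hG₂ : ∀ i, i ≠ k → G₂ i = F i)
    (hFk : ((F k : Rˣ) : R) = ((G₁ k : Rˣ) : R) + ((G₂ k : Rˣ) : R)) :
    ∀ l : List (Fin m), l.count k = 1 →
      (((l.map F).prod : Rˣ) : R) = (((l.map G₁).prod : Rˣ) : R) + (((l.map G₂).prod : Rˣ) : R) := by
  intro l
  induction l with
  | nil => intro h; rw [List.count_nil] at h; exact absurd h (by omega)
  | cons i l ih =>
    intro hc
    rw [List.count_cons] at hc
    by_cases hik : i = k
    · subst hik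
      simp only [beq_self_eq_true, if_true] at hc
      have hc0 : l.count i = 0 := by omega
      have hnk : i ∉ l := List.count_eq_zero.mp hc0
      have e1 : l.map G₁ = l.map F := List.map_congr_left (fun x hx => hG₁ x (fun h => hnk (h ▸ hx)))
      have e2 : l.map G₂ = l.map F := List.map_congr_left (fun x hx => hG₂ x (fun h => hnk (h ▸ hx)))
      rw [List.map_cons, List.map_cons, List.map_cons, List.prod_cons, List.prod_cons,
        List.prod_cons, e1, e2, Units.val_mul, Units.val_mul, Units.val_mul, hFk, add_mul]
    · have hne : (i == k) = false := beq_eq_false_iff_ne.mpr hik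
      have hc1 : l.count k = 1 := by simpa [hne] using hc
      rw [List.map_cons, List.map_cons, List.map_cons, List.prod_cons, List.prod_cons,
        List.prod_cons, Units.val_mul, Units.val_mul, Units.val_mul,
        hG₁ i hik, hG₂ i hik, ih hc1, mul_add]

lemma invProd (ht : ∀ r : R, (t : R) * r = r * (t : R))
    (hX0 : X 0 = 1) (hXmul : ∀ g h, X g * X h = t ^ (Λ g h) * X (g + h))
    (k : Fin m) (K : Rˣ) (vP : Fin m → ℤ)
    (hq : ∀ γ : Fin m → ℤ, γ k = 0 → K⁻¹ * X γ = t ^ (2 * Λ γ vP) * (X γ * K⁻¹))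
    (w : Fin m → Fin m → ℤ) (hwk : ∀ j, j ≠ k → (w j) k = 0)
    (F : Fin m → Rˣ) (hF : ∀ i, i ≠ k → F i = X (w i)) (hFk : F k = K⁻¹) :
    ∀ l : List (Fin m), l.count k = 1 →
      (l.map F).prod = t ^ (2 * Λ (((afterK k l).map w).sum) vP) *
        ((l.map (fun i => if i = k then 1 else F i)).prod * K⁻¹) := by
  intro l
  induction l with
  | nil => intro h; rw [List.count_nil] at h; exact absurd h (by omega)
  | cons i l ih =>
    intro hc
    rw [List.count_cons] at hc
    by_cases hik : i = k
    · subst hik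
      simp only [beq_self_eq_true, if_true] at hc
      have hc0 : l.count i = 0 := by omega
      have hnk : i ∉ l := List.count_eq_zero.mp hc0
      have e1 : l.map F = l.map (fun j => X (w j)) :=
        List.map_congr_left (fun x hx => hF x (by rintro rfl; exact hnk hx))
      have e2 : (l.map (fun j => if j = i then 1 else F j)) = l.map F :=
        List.map_congr_left (fun x hx => if_neg (by rintro rfl; exact hnk hx))
      have hP : (l.map F).prod = t ^ (pairS Λ w l) * X ((l.map w).sum) := by
        rw [e1]; exact prodListAux t Λ X ht hX0 hXmul w l
      have hsk : ((l.map w).sum) i = 0 := by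
        have := map_list_sum (Pi.evalAddMonoidHom (fun _ : Fin m => ℤ) i) (l.map w)
        simp only [Pi.evalAddMonoidHom_apply] at this
        rw [this, List.map_map]
        apply List.sum_eq_zero
        intro x hx
        simp only [List.mem_map] at hx
        obtain ⟨j, hj, rfl⟩ := hx
        refine hwk j ?_
        rintro rfl
        exact hnk hj
      rw [List.map_cons, List.prod_cons, hFk, hP]
      rw [List.map_cons, List.prod_cons, e2, hP]
      rw [afterK, if_pos rfl]
      rw [← mul_assoc K⁻¹, ← tcommU t ht _ K⁻¹, mul_assoc, hq _ hsk]
      rw [if_pos rfl, one_mul, mul_assoc (t ^ pairS Λ w l) (X (l.map w).sum) K⁻¹,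
        ← mul_assoc, ← mul_assoc, ← zpow_add, mul_assoc,
        ← mul_assoc (t ^ (2 * Λ (List.map w l).sum vP)), ← zpow_add, add_comm (pairS Λ w l)]
    · have hc1 : l.count k = 1 := by simpa [hik] using hc
      rw [List.map_cons, List.prod_cons, List.map_cons, List.prod_cons, if_neg hik,
        ih hc1, afterK, if_neg hik]
      rw [← mul_assoc, ← tcommU t ht, mul_assoc, mul_assoc (F i)]

end Helpers


theorem stmt14    {m : ℕ} (hm : 5 ≤ m) {R : Type*} [Ring R]
    (t : Rˣ) (ht : ∀ r : R, (t : R) * r = r * (t : R))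
    (Λ : (Fin m → ℤ) →ₗ[ℤ] (Fin m → ℤ) →ₗ[ℤ] ℤ)
    (hΛskew : ∀ g h, Λ g h = -Λ h g)
    (X : (Fin m → ℤ) → Rˣ)
    (hX0 : X 0 = 1)
    (hXmul : ∀ g h, X g * X h = t ^ (Λ g h) * X (g + h))
    (k : Fin m) (b : Fin m → ℤ) (hbkk : b k = 0)
    (hcompat : ∀ j, Λ (stdE j) b = if j = k then 1 else 0)
    (X' : Fin m → Rˣ)
    (hX'ne : ∀ i, i ≠ k → X' i = X (stdE i))
    (hX'k : (X' k : R) = (X (-stdE k + bPlus b) : R) + (X (-stdE k + bMinus b) : R))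
    (Lam' : Fin m → Fin m → ℤ)
    (hLam'skew : ∀ i j, Lam' i j = -Lam' j i)
    (hLam'nk : ∀ i j, i ≠ k → j ≠ k → Lam' i j = Λ (stdE i) (stdE j))
    (hLam'k : ∀ i, i ≠ k → Lam' i k = Λ (stdE i) (-stdE k + bPlus b))
    (p q q2 r : Fin m)
    (hpq : p ≠ q) (hpq2 : p ≠ q2) (hpr : p ≠ r)
    (hqq2 : q ≠ q2) (hqr : q ≠ r) (hq2r : q2 ≠ r)
    (hpk : p ≠ k) (hqk : q ≠ k) (hq2k : q2 ≠ k) (hrk : r ≠ k)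
    (B : Fin m → Fin m → ℤ)
    (hBb : ∀ i, B i k = b i)
    (hbval : b = -stdE q - stdE q2 + stdE p + stdE r)
    (hBkq : B k q = 1) (hBkq2 : B k q2 = 1) (hBkp : B k p = -1) (hBkr : B k r = -1)
    (hBk0 : ∀ j, j ≠ q → j ≠ q2 → j ≠ p → j ≠ r → B k j = 0)
    (B' : Fin m → Fin m → ℤ)
    (hB' : ∀ i j, B' i j = if i = k ∨ j = k then -B i j
      else B i j + max (B i k) 0 * B k j + B i k * max (-(B k j)) 0)
    (g g' : Fin m → ℤ) (hgk : g k = -1) (hg'k : g' k = 1)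
    (hg' : ∀ j, j ≠ k → g' j = g j - max (-(B j k)) 0) :
    ((X g : Rˣ) : R) + ((X (g + col B k) : Rˣ) : R) = ((XpPow t Lam' X' g' : Rˣ) : R)
    ∧ ((X (g + col B k + col B q2) : Rˣ) : R)
        = ((XpPow t Lam' X' (g' + col B' q2) : Rˣ) : R)
    ∧ ((X (g + col B k + col B q) : Rˣ) : R)
        = ((XpPow t Lam' X' (g' + col B' q) : Rˣ) : R)
    ∧ ((X (g + col B q + col B k + col B q2) : Rˣ) : R)
        = ((XpPow t Lam' X' (g' + col B' q + col B' k + col B' q2) : Rˣ) : R)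
          + ((XpPow t Lam' X' (g' + col B' q + col B' q2) : Rˣ) : R) := by
  classical
  set vP : Fin m → ℤ := -stdE k + bPlus b with hvPdef
  set vM : Fin m → ℤ := -stdE k + bMinus b with hvMdef
  have htc : ∀ (n : ℤ) (u : Rˣ), t ^ n * u = u * t ^ n := tcommU t ht
  have hXz : ∀ (v : Fin m → ℤ) (n : ℤ), X v ^ n = X (n • v) :=
    XzpowAux t Λ X hX0 hXmul hΛskew
  have hbil : ∀ (ci cj : ℤ) (x y : Fin m → ℤ), Λ (ci • x) (cj • y) = ci * cj * Λ x y := by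
    intro ci cj x y
    have h1 : Λ (ci • x) = ci • Λ x := map_smul Λ ci x
    rw [h1, LinearMap.smul_apply, map_smul, smul_eq_mul, smul_eq_mul]
    ring
  have hbilL : ∀ (c : ℤ) (x y : Fin m → ℤ), Λ (c • x) y = c * Λ x y := by
    intro c x y
    have h1 : Λ (c • x) = c • Λ x := map_smul Λ c x
    rw [h1, LinearMap.smul_apply, smul_eq_mul]
  have hbilR : ∀ (c : ℤ) (x y : Fin m → ℤ), Λ x (c • y) = c * Λ x y := by
    intro c x y
    rw [map_smul, smul_eq_mul]
  have hsumE : ∀ x : Fin m → ℤ, ∑ i, x i • stdE i = x := by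
    intro x
    have hs : ∀ i : Fin m, x i • stdE i = Pi.single i (x i) := by
      intro i; funext j
      by_cases h : j = i <;> simp [stdE, Pi.single_apply, h]
    simp_rw [hs]
    exact Finset.univ_sum_single x
  have hexpand : ∀ x y : Fin m → ℤ, Λ x y = ∑ j, x j * Λ (stdE j) y := by
    intro x y
    conv_lhs => rw [← hsumE x]
    rw [map_sum, LinearMap.sum_apply]
    refine Finset.sum_congr rfl fun j _ => ?_
    rw [map_smul, LinearMap.smul_apply, smul_eq_mul]
  have hΛxb : ∀ x : Fin m → ℤ, Λ x b = x k := by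
    intro x
    rw [hexpand]
    simp_rw [hcompat]
    rw [Finset.sum_congr rfl (fun j _ => by rw [mul_ite, mul_one, mul_zero]),
      Finset.sum_ite_eq' Finset.univ k x, if_pos (Finset.mem_univ k)]
  have hvPM : vP - vM = b := by
    funext j
    simp only [hvPdef, hvMdef, Pi.sub_apply, Pi.add_apply, bPlus, bMinus]
    omega
  have hΛePM : ∀ i, i ≠ k → Λ (stdE i) vP = Λ (stdE i) vM := by
    intro i hik
    have h1 : Λ (stdE i) vP - Λ (stdE i) vM = Λ (stdE i) b := by
      rw [← map_sub, hvPM]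
    have h2 : Λ (stdE i) b = 0 := by rw [hcompat, if_neg hik]
    omega
  have hΛxPM : ∀ x : Fin m → ℤ, x k = 0 → Λ x vP = Λ x vM := by
    intro x hx
    have h1 : Λ x vP - Λ x vM = Λ x b := by rw [← map_sub, hvPM]
    have h2 := hΛxb x
    omega
  have hL1 : (List.finRange m).count k = 1 :=
    List.count_eq_one_of_mem (List.nodup_finRange m) (List.mem_finRange k)
  have hLs : (List.finRange m).Pairwise (· < ·) := List.pairwise_lt_finRange m
  have hLt : (List.finRange m).toFinset = Finset.univ := List.toFinset_finRange m
  have hWsum : ∀ (v : Fin m → ℤ) (c : Fin m → ℤ),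
      ((List.finRange m).map (fun i => if i = k then v else c i • stdE i)).sum
        = (fun j => if j = k then (0:ℤ) else c j) + v := by
    intro v c
    rw [← Fin.sum_univ_def]
    funext j
    rw [Finset.sum_apply, ← Finset.add_sum_erase _ _ (Finset.mem_univ k)]
    simp only [if_pos rfl]
    by_cases hjk : j = k
    · subst hjk
      have hz : ∀ i ∈ Finset.univ.erase j,
          (if i = j then v else c i • stdE i) j = 0 := by
        intro i hi
        have hij : i ≠ j := (Finset.mem_erase.mp hi).1
        rw [if_neg hij]
        simp [stdE, Pi.single_apply, (Ne.symm hij : ¬ j = i)]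
      rw [Finset.sum_eq_zero hz]
      simp
    · have hone : ∑ i ∈ Finset.univ.erase k, (if i = k then v else c i • stdE i) j
          = c j := by
        rw [Finset.sum_eq_single_of_mem j
          (Finset.mem_erase.mpr ⟨hjk, Finset.mem_univ j⟩)]
        · rw [if_neg hjk]; simp [stdE, Pi.single_apply]
        · intro i hi hij
          have hik : i ≠ k := (Finset.mem_erase.mp hi).1
          rw [if_neg hik]
          simp [stdE, Pi.single_apply, (Ne.symm hij : ¬ j = i)]
      rw [hone]
      simp [hjk, add_comm]
  have lemA : ∀ a : Fin m → ℤ, a k = 0 → XpPow t Lam' X' a = X a := by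
    intro a hak
    have hmap : (List.finRange m).map (fun i => X' i ^ a i)
        = (List.finRange m).map (fun i => X ((fun i => a i • stdE i) i)) := by
      refine List.map_congr_left fun i _ => ?_
      by_cases hik : i = k
      · subst hik
        show X' i ^ a i = X (a i • stdE i)
        rw [hak, zpow_zero, zero_smul, hX0]
      · show X' i ^ a i = X (a i • stdE i)
        rw [hX'ne i hik, hXz]
    rw [XpPow, hmap, prodListAux t Λ X ht hX0 hXmul]
    have hsum : ((List.finRange m).map (fun i => a i • stdE i)).sum = a := by
      rw [← Fin.sum_univ_def]; exact hsumE a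
    have hexp : pairS Λ (fun i => a i • stdE i) (List.finRange m)
        = ∑ i, ∑ j, if i < j then a i * a j * Lam' i j else 0 := by
      rw [pairS_sorted Λ _ _ hLs, hLt]
      refine Finset.sum_congr rfl fun i _ => Finset.sum_congr rfl fun j _ => ?_
      by_cases hij : i < j
      · rw [if_pos hij, if_pos hij, hbil]
        by_cases hik : i = k
        · subst hik; rw [hak]; ring
        · by_cases hjk : j = k
          · subst hjk; rw [hak]; ring
          · rw [hLam'nk i j hik hjk]
      · rw [if_neg hij, if_neg hij]
    rw [hsum, hexp, ← mul_assoc, ← zpow_add, neg_add_cancel, zpow_zero, one_mul]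
  have lemB : ∀ a : Fin m → ℤ, a k = 1 →
      ((XpPow t Lam' X' a : Rˣ) : R)
        = ((X ((fun j => if j = k then (0:ℤ) else a j) + vP) : Rˣ) : R)
          + ((X ((fun j => if j = k then (0:ℤ) else a j) + vM) : Rˣ) : R) := by
    intro a hak
    have hexpP : pairS Λ (fun i => if i = k then vP else a i • stdE i) (List.finRange m)
        = ∑ i, ∑ j, if i < j then a i * a j * Lam' i j else 0 := by
      rw [pairS_sorted Λ _ _ hLs, hLt]
      refine (Finset.sum_congr rfl fun i _ => Finset.sum_congr rfl fun j _ => ?_).symm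
      by_cases hij : i < j
      · rw [if_pos hij, if_pos hij]
        by_cases hik : i = k
        · subst hik
          have hjk : j ≠ i := ne_of_gt hij
          rw [if_pos rfl, if_neg hjk, hak, hLam'skew i j, hLam'k j hjk, hbilR,
            hΛskew vP (stdE j)]
          ring
        · rw [if_neg hik]
          by_cases hjk : j = k
          · subst hjk
            rw [if_pos rfl, hak, hLam'k i hik, hbilL]
            ring
          · rw [if_neg hjk, hbil, hLam'nk i j hik hjk]
      · rw [if_neg hij, if_neg hij]
    have hexpM : pairS Λ (fun i => if i = k then vM else a i • stdE i) (List.finRange m)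
        = ∑ i, ∑ j, if i < j then a i * a j * Lam' i j else 0 := by
      rw [pairS_sorted Λ _ _ hLs, hLt]
      refine (Finset.sum_congr rfl fun i _ => Finset.sum_congr rfl fun j _ => ?_).symm
      by_cases hij : i < j
      · rw [if_pos hij, if_pos hij]
        by_cases hik : i = k
        · subst hik
          have hjk : j ≠ i := ne_of_gt hij
          rw [if_pos rfl, if_neg hjk, hak, hLam'skew i j, hLam'k j hjk, hbilR,
            hΛskew vM (stdE j), ← hΛePM j hjk]
          ring
        · rw [if_neg hik]
          by_cases hjk : j = k
          · subst hjk
            rw [if_pos rfl, hak, hLam'k i hik, hbilL, hΛePM i hik]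
            ring
          · rw [if_neg hjk, hbil, hLam'nk i j hik hjk]
      · rw [if_neg hij, if_neg hij]
    have hprodP : ((List.finRange m).map
          (fun i => X ((fun i => if i = k then vP else a i • stdE i) i))).prod
        = t ^ (∑ i, ∑ j, if i < j then a i * a j * Lam' i j else 0)
          * X ((fun j => if j = k then (0:ℤ) else a j) + vP) := by
      rw [prodListAux t Λ X ht hX0 hXmul, hexpP, hWsum]
    have hprodM : ((List.finRange m).map
          (fun i => X ((fun i => if i = k then vM else a i • stdE i) i))).prod
        = t ^ (∑ i, ∑ j, if i < j then a i * a j * Lam' i j else 0)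
          * X ((fun j => if j = k then (0:ℤ) else a j) + vM) := by
      rw [prodListAux t Λ X ht hX0 hXmul, hexpM, hWsum]
    have hG1 : ∀ i, i ≠ k →
        X ((fun i => if i = k then vP else a i • stdE i) i) = X' i ^ a i := by
      intro i hik
      show X (if i = k then vP else a i • stdE i) = X' i ^ a i
      rw [if_neg hik, hX'ne i hik, hXz]
    have hG2 : ∀ i, i ≠ k →
        X ((fun i => if i = k then vM else a i • stdE i) i) = X' i ^ a i := by
      intro i hik
      show X (if i = k then vM else a i • stdE i) = X' i ^ a i
      rw [if_neg hik, hX'ne i hik, hXz]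
    have hFk : ((X' k ^ a k : Rˣ) : R)
        = ((X ((fun i => if i = k then vP else a i • stdE i) k) : Rˣ) : R)
          + ((X ((fun i => if i = k then vM else a i • stdE i) k) : Rˣ) : R) := by
      show ((X' k ^ a k : Rˣ) : R)
        = ((X (if k = k then vP else a k • stdE k) : Rˣ) : R)
          + ((X (if k = k then vM else a k • stdE k) : Rˣ) : R)
      rw [hak, zpow_one, if_pos rfl, if_pos rfl, hX'k]
    have hD := distribK k (fun i => X' i ^ a i) _ _ hG1 hG2 hFk (List.finRange m) hL1
    rw [XpPow, Units.val_mul, hD, hprodP, hprodM, mul_add, ← Units.val_mul, ← Units.val_mul,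
      ← mul_assoc, ← zpow_add, neg_add_cancel, zpow_zero, one_mul,
      ← mul_assoc, ← zpow_add, neg_add_cancel, zpow_zero, one_mul]
  have hcommK : ∀ γ : Fin m → ℤ, γ k = 0 →
      X γ * X' k = t ^ (2 * Λ γ vP) * (X' k * X γ) := by
    intro γ hγ
    have hγPM : Λ γ vM = Λ γ vP := (hΛxPM γ hγ).symm
    have harith : 2 * Λ γ vP + -Λ γ vP = Λ γ vP := by ring
    have e1 : X γ * X vP = t ^ (2 * Λ γ vP) * (X vP * X γ) := by
      rw [hXmul γ vP, hXmul vP γ, hΛskew vP γ, ← mul_assoc, ← zpow_add, add_comm γ vP, harith]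
    have e2 : X γ * X vM = t ^ (2 * Λ γ vP) * (X vM * X γ) := by
      rw [hXmul γ vM, hXmul vM γ, hΛskew vM γ, hγPM, ← mul_assoc, ← zpow_add,
        add_comm γ vM, harith]
    apply Units.ext
    rw [Units.val_mul, Units.val_mul, Units.val_mul, hX'k, mul_add, add_mul, mul_add,
      ← Units.val_mul (X γ) (X vP), ← Units.val_mul (X γ) (X vM),
      ← Units.val_mul (X vP) (X γ), ← Units.val_mul (X vM) (X γ), e1, e2,
      Units.val_mul, Units.val_mul, Units.val_mul]
  have hq : ∀ γ : Fin m → ℤ, γ k = 0 →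
      (X' k)⁻¹ * X γ = t ^ (2 * Λ γ vP) * (X γ * (X' k)⁻¹) := by
    intro γ hγ
    calc (X' k)⁻¹ * X γ = (X' k)⁻¹ * (X γ * X' k) * (X' k)⁻¹ := by
          rw [mul_assoc ((X' k)⁻¹), mul_assoc, mul_inv_cancel, mul_one]
      _ = (X' k)⁻¹ * (t ^ (2 * Λ γ vP) * (X' k * X γ)) * (X' k)⁻¹ := by
          rw [hcommK γ hγ]
      _ = t ^ (2 * Λ γ vP) * (X γ * (X' k)⁻¹) := by
          rw [← mul_assoc ((X' k)⁻¹) (t ^ (2 * Λ γ vP)) (X' k * X γ),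
            ← htc (2 * Λ γ vP) ((X' k)⁻¹),
            mul_assoc (t ^ (2 * Λ γ vP)) ((X' k)⁻¹) (X' k * X γ),
            inv_mul_cancel_left, mul_assoc]
  have lemC : ∀ a : Fin m → ℤ, a k = -1 →
      XpPow t Lam' X' a
        = t ^ (Λ ((fun j => if j = k then (0:ℤ) else a j) : Fin m → ℤ) vP)
          * (X (fun j => if j = k then (0:ℤ) else a j) * (X' k)⁻¹) := by
    intro a hak
    have hF : ∀ i, i ≠ k →
        (fun i => X' i ^ a i) i = X ((fun i => a i • stdE i) i) := by
      intro i hik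
      show X' i ^ a i = X (a i • stdE i)
      rw [hX'ne i hik, hXz]
    have hFk : (fun i => X' i ^ a i) k = (X' k)⁻¹ := by
      show X' k ^ a k = (X' k)⁻¹
      rw [hak, zpow_neg_one]
    have hwk : ∀ j, j ≠ k → ((fun i => a i • stdE i) j) k = 0 := by
      intro j hjk
      show (a j • stdE j) k = 0
      simp [stdE, Pi.single_apply, (Ne.symm hjk : ¬ (k = j))]
    have hinv := invProd t Λ X ht hX0 hXmul k (X' k) vP hq (fun i => a i • stdE i) hwk
      (fun i => X' i ^ a i) hF hFk (List.finRange m) hL1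
    have hγ : ((afterK k (List.finRange m)).map (fun i => a i • stdE i)).sum
        = ∑ j ∈ Finset.univ.filter (fun j => k < j), a j • stdE j := by
      rw [afterK_sum k _ (List.finRange m) hLs (List.mem_finRange k), hLt]
    have hγval : Λ (∑ j ∈ Finset.univ.filter (fun j => k < j), a j • stdE j) vP
        = ∑ j ∈ Finset.univ.filter (fun j => k < j), a j * Λ (stdE j) vP := by
      rw [map_sum, LinearMap.sum_apply]
      exact Finset.sum_congr rfl fun j _ => hbilL (a j) (stdE j) vP
    have hcongrQ : (List.finRange m).map (fun i => if i = k then 1 else (fun i => X' i ^ a i) i)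
        = (List.finRange m).map
          (fun i => X ((fun i => if i = k then (0 : Fin m → ℤ) else a i • stdE i) i)) := by
      refine List.map_congr_left fun i _ => ?_
      by_cases hik : i = k
      · rw [if_pos hik]
        show (1 : Rˣ) = X (if i = k then (0 : Fin m → ℤ) else a i • stdE i)
        rw [if_pos hik, hX0]
      · rw [if_neg hik]
        show X' i ^ a i = X (if i = k then (0 : Fin m → ℤ) else a i • stdE i)
        rw [if_neg hik, hX'ne i hik, hXz]
    have hQsum : ((List.finRange m).map
        (fun i => if i = k then (0 : Fin m → ℤ) else a i • stdE i)).sum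
        = (fun j => if j = k then (0:ℤ) else a j) := by
      rw [hWsum 0 a, add_zero]
    have hQ : ((List.finRange m).map
          (fun i => if i = k then 1 else (fun i => X' i ^ a i) i)).prod
        = t ^ (pairS Λ (fun i => if i = k then (0 : Fin m → ℤ) else a i • stdE i)
            (List.finRange m))
          * X (fun j => if j = k then (0:ℤ) else a j) := by
      rw [hcongrQ, prodListAux t Λ X ht hX0 hXmul, hQsum]
    have hT : pairS Λ (fun i => if i = k then (0 : Fin m → ℤ) else a i • stdE i)
          (List.finRange m)
        = ∑ i, ∑ j, if i < j then
            Λ (if i = k then (0 : Fin m → ℤ) else a i • stdE i)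
              (if j = k then (0 : Fin m → ℤ) else a j • stdE j) else 0 := by
      rw [pairS_sorted Λ _ _ hLs, hLt]
    have hdiff : ∀ i j : Fin m,
        (if i < j then a i * a j * Lam' i j else 0)
          - (if i < j then
              Λ (if i = k then (0 : Fin m → ℤ) else a i • stdE i)
                (if j = k then (0 : Fin m → ℤ) else a j • stdE j) else 0)
        = (if i = k then (if k < j then a j * Λ (stdE j) vP else 0)
            else if j = k then (if i < k then -(a i * Λ (stdE i) vP) else 0) else 0) := by
      intro i j
      by_cases hik : i = k
      · simp only [if_pos hik]
        by_cases hkj : k < j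
        · have hjk : ¬ j = k := ne_of_gt hkj
          have hij : i < j := by rw [hik]; exact hkj
          simp only [if_pos hij, if_pos hkj, if_neg hjk]
          rw [map_zero Λ, LinearMap.zero_apply, hik, hak, hLam'skew k j, hLam'k j hjk]
          ring
        · have hij : ¬ i < j := by rw [hik]; exact hkj
          simp only [if_neg hij, if_neg hkj]
          ring
      · simp only [if_neg hik]
        by_cases hjk : j = k
        · simp only [if_pos hjk]
          by_cases hikk : i < k
          · have hij : i < j := by rw [hjk]; exact hikk
            simp only [if_pos hij, if_pos hikk]
            rw [map_zero (Λ (a i • stdE i)), hjk, hak, hLam'k i hik]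
            ring
          · have hij : ¬ i < j := by rw [hjk]; exact hikk
            simp only [if_neg hij, if_neg hikk]
            ring
        · simp only [if_neg hjk]
          by_cases hij : i < j
          · simp only [if_pos hij]
            rw [hbil, hLam'nk i j hik hjk]
            ring
          · simp only [if_neg hij]
            ring
    have hST : (∑ i, ∑ j, if i < j then a i * a j * Lam' i j else 0)
        - (∑ i, ∑ j, if i < j then
            Λ (if i = k then (0 : Fin m → ℤ) else a i • stdE i)
              (if j = k then (0 : Fin m → ℤ) else a j • stdE j) else 0)
        = (∑ j ∈ Finset.univ.filter (fun j => k < j), a j * Λ (stdE j) vP)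
          - (∑ j ∈ Finset.univ.filter (fun j => j < k), a j * Λ (stdE j) vP) := by
      rw [← Finset.sum_sub_distrib]
      simp_rw [← Finset.sum_sub_distrib]
      simp_rw [hdiff]
      rw [← Finset.add_sum_erase _ _ (Finset.mem_univ k)]
      have hfk : (∑ j, if (k : Fin m) = k then (if k < j then a j * Λ (stdE j) vP else 0)
          else if j = k then (if k < k then -(a k * Λ (stdE k) vP) else 0) else 0)
          = ∑ j ∈ Finset.univ.filter (fun j => k < j), a j * Λ (stdE j) vP := by
        rw [Finset.sum_filter]
        exact Finset.sum_congr rfl fun j _ => if_pos rfl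
      have herase : (∑ i ∈ Finset.univ.erase k,
            ∑ j, (if i = k then (if k < j then a j * Λ (stdE j) vP else 0)
              else if j = k then (if i < k then -(a i * Λ (stdE i) vP) else 0) else 0))
          = ∑ i ∈ Finset.univ.erase k, (if i < k then -(a i * Λ (stdE i) vP) else 0) := by
        refine Finset.sum_congr rfl fun i hi => ?_
        have hik : i ≠ k := (Finset.mem_erase.mp hi).1
        rw [Finset.sum_eq_single k]
        · rw [if_neg hik, if_pos rfl]
        · intro j _ hjk
          rw [if_neg hik, if_neg hjk]
        · intro h
          exact absurd (Finset.mem_univ k) h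
      have herase2 : (∑ i ∈ Finset.univ.erase k,
            (if i < k then -(a i * Λ (stdE i) vP) else 0))
          = -(∑ j ∈ Finset.univ.filter (fun j => j < k), a j * Λ (stdE j) vP) := by
        rw [Finset.sum_erase _ (by rw [if_neg (lt_irrefl k)]), Finset.sum_filter,
          ← Finset.sum_neg_distrib]
        refine Finset.sum_congr rfl fun i _ => ?_
        by_cases h : i < k
        · rw [if_pos h, if_pos h]
        · rw [if_neg h, if_neg h, neg_zero]
      rw [hfk, herase, herase2, ← sub_eq_add_neg]
    have hsplit : (∑ j, (if j = k then (0:ℤ) else a j) * Λ (stdE j) vP)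
        = (∑ j ∈ Finset.univ.filter (fun j => k < j), a j * Λ (stdE j) vP)
          + (∑ j ∈ Finset.univ.filter (fun j => j < k), a j * Λ (stdE j) vP) := by
      rw [Finset.sum_filter, Finset.sum_filter, ← Finset.sum_add_distrib]
      refine Finset.sum_congr rfl fun j _ => ?_
      by_cases hjk : j = k
      · rw [if_pos hjk, hjk, if_neg (lt_irrefl k)]
        simp
      · rw [if_neg hjk]
        rcases lt_or_gt_of_ne hjk with h | h
        · rw [if_neg (lt_asymm h), if_pos h, zero_add]
        · rw [if_pos h, if_neg (lt_asymm h), add_zero]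
    rw [XpPow, hinv, hγ, hQ, hγval, hT,
      mul_assoc (t ^ (∑ i, ∑ j, if i < j then
          Λ (if i = k then (0 : Fin m → ℤ) else a i • stdE i)
            (if j = k then (0 : Fin m → ℤ) else a j • stdE j) else 0)),
      ← mul_assoc (t ^ (2 * ∑ j ∈ Finset.univ.filter (fun j => k < j), a j * Λ (stdE j) vP)),
      ← zpow_add, ← mul_assoc, ← zpow_add]
    congr 2
    rw [hexpand]
    have hexp2 : (∑ j, ((fun j => if j = k then (0:ℤ) else a j) j) * Λ (stdE j) vP)
        = ∑ j, (if j = k then (0:ℤ) else a j) * Λ (stdE j) vP := rfl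
    rw [hexp2, hsplit]
    omega
  have hvPj : ∀ j, vP j = (if j = k then (-1:ℤ) else 0) + max (b j) 0 := by
    intro j
    show (-stdE k + bPlus b) j = _
    simp only [Pi.add_apply, Pi.neg_apply, bPlus, stdE, Pi.single_apply]
    by_cases h : j = k <;> simp [h]
  have hvMj : ∀ j, vM j = (if j = k then (-1:ℤ) else 0) + max (-(b j)) 0 := by
    intro j
    show (-stdE k + bMinus b) j = _
    simp only [Pi.add_apply, Pi.neg_apply, bMinus, stdE, Pi.single_apply]
    by_cases h : j = k <;> simp [h]
  have hm10 : max (-1:ℤ) 0 = 0 := by norm_num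
  refine ⟨?_, ?_, ?_, ?_⟩
  · -- part (a)
    rw [lemB g' hg'k]
    have e1 : (fun j => if j = k then (0:ℤ) else g' j) + vP = g + col B k := by
      funext j
      simp only [Pi.add_apply, col]
      rw [hvPj j, hBb j]
      by_cases hjk : j = k
      · rw [if_pos hjk, if_pos hjk, hjk, hgk, hbkk]
        omega
      · rw [if_neg hjk, if_neg hjk, hg' j hjk, hBb j]
        omega
    have e2 : (fun j => if j = k then (0:ℤ) else g' j) + vM = g := by
      funext j
      simp only [Pi.add_apply]
      rw [hvMj j]
      by_cases hjk : j = k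
      · rw [if_pos hjk, if_pos hjk, hjk, hgk, hbkk]
        omega
      · rw [if_neg hjk, if_neg hjk, hg' j hjk, hBb j]
        omega
    rw [e1, e2]
    exact add_comm _ _
  · -- part (b)
    have hak : (g' + col B' q2) k = 0 := by
      simp only [Pi.add_apply, col]
      rw [hB' k q2, if_pos (Or.inl rfl), hBkq2, hg'k]
      norm_num
    rw [lemA _ hak]
    have e : g' + col B' q2 = g + col B k + col B q2 := by
      funext j
      simp only [Pi.add_apply, col]
      rw [hB' j q2, hBb j]
      by_cases hjk : j = k
      · rw [if_pos (Or.inl hjk), hjk, hg'k, hgk, hbkk, hBkq2]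
        norm_num
      · rw [if_neg (by rintro (h | h); exact hjk h; exact hq2k h),
          hg' j hjk, hBb j, hBkq2, hm10, mul_zero, mul_one]
        omega
    rw [e]
  · -- part (c)
    have hak : (g' + col B' q) k = 0 := by
      simp only [Pi.add_apply, col]
      rw [hB' k q, if_pos (Or.inl rfl), hBkq, hg'k]
      norm_num
    rw [lemA _ hak]
    have e : g' + col B' q = g + col B k + col B q := by
      funext j
      simp only [Pi.add_apply, col]
      rw [hB' j q, hBb j]
      by_cases hjk : j = k
      · rw [if_pos (Or.inl hjk), hjk, hg'k, hgk, hbkk, hBkq]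
        norm_num
      · rw [if_neg (by rintro (h | h); exact hjk h; exact hqk h),
          hg' j hjk, hBb j, hBkq, hm10, mul_zero, mul_one]
        omega
    rw [e]
  · -- part (d)
    have hak1 : (g' + col B' q + col B' k + col B' q2) k = -1 := by
      simp only [Pi.add_apply, col]
      rw [hB' k q, hB' k k, hB' k q2, if_pos (Or.inl rfl), if_pos (Or.inl rfl),
        if_pos (Or.inl rfl), hBkq, hBkq2, hBb k, hbkk, hg'k]
      norm_num
    have hak2 : (g' + col B' q + col B' q2) k = -1 := by
      simp only [Pi.add_apply, col]
      rw [hB' k q, hB' k q2, if_pos (Or.inl rfl), if_pos (Or.inl rfl), hBkq, hBkq2, hg'k]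
      norm_num
    have hwkval : (g + col B q + col B k + col B q2) k = 1 := by
      simp only [Pi.add_apply, col]
      rw [hBkq, hBkq2, hBb k, hbkk, hgk]
      norm_num
    have hδ1 : (fun j => if j = k then (0:ℤ) else (g' + col B' q + col B' k + col B' q2) j)
        = (g + col B q + col B k + col B q2) + vM := by
      funext j
      by_cases hjk : j = k
      · rw [if_pos hjk]
        simp only [Pi.add_apply, col]
        rw [hvMj j, if_pos hjk, hjk, hBkq, hBkq2, hBb k, hbkk, hgk]
        norm_num
      · rw [if_neg hjk]
        simp only [Pi.add_apply, col]
        rw [hvMj j, if_neg hjk, hB' j q, hB' j k, hB' j q2,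
          if_neg (by rintro (h | h); exact hjk h; exact hqk h),
          if_pos (Or.inr rfl),
          if_neg (by rintro (h | h); exact hjk h; exact hq2k h),
          hg' j hjk, hBb j, hBkq, hBkq2, hm10, mul_zero, mul_one]
        omega
    have hδ2 : (fun j => if j = k then (0:ℤ) else (g' + col B' q + col B' q2) j)
        = (g + col B q + col B k + col B q2) + vP := by
      funext j
      by_cases hjk : j = k
      · rw [if_pos hjk]
        simp only [Pi.add_apply, col]
        rw [hvPj j, if_pos hjk, hjk, hBkq, hBkq2, hBb k, hbkk, hgk]
        norm_num
      · rw [if_neg hjk]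
        simp only [Pi.add_apply, col]
        rw [hvPj j, if_neg hjk, hB' j q, hB' j q2,
          if_neg (by rintro (h | h); exact hjk h; exact hqk h),
          if_neg (by rintro (h | h); exact hjk h; exact hq2k h),
          hg' j hjk, hBb j, hBkq, hBkq2, hm10, mul_zero, mul_one]
        omega
    have hWb : Λ (g + col B q + col B k + col B q2) b = 1 := by
      rw [hΛxb]
      exact hwkval
    have hMb : Λ vM b = -1 := by
      rw [hΛxb, hvMj k, if_pos rfl, hbkk]
      norm_num
    have e1 : Λ ((g + col B q + col B k + col B q2) + vP) vP
        = Λ (g + col B q + col B k + col B q2) vP := by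
      rw [map_add Λ, LinearMap.add_apply, lamSelf Λ hΛskew vP, add_zero]
    have e2 : Λ ((g + col B q + col B k + col B q2) + vM) vP
        = Λ (g + col B q + col B k + col B q2) vM := by
      have h1 : Λ vM vP = -1 := by
        have h2 : Λ vM vP - Λ vM vM = Λ vM b := by rw [← map_sub, hvPM]
        have h3 := lamSelf Λ hΛskew vM
        omega
      have h4 : Λ (g + col B q + col B k + col B q2) vP
          - Λ (g + col B q + col B k + col B q2) vM
          = Λ (g + col B q + col B k + col B q2) b := by
        rw [← map_sub, hvPM]
      rw [map_add Λ, LinearMap.add_apply, h1]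
      omega
    have hK : ((X (g + col B q + col B k + col B q2) : Rˣ) : R) * ((X' k : Rˣ) : R)
        = ((t ^ (Λ ((g + col B q + col B k + col B q2) + vP) vP)
            * X ((g + col B q + col B k + col B q2) + vP) : Rˣ) : R)
          + ((t ^ (Λ ((g + col B q + col B k + col B q2) + vM) vP)
            * X ((g + col B q + col B k + col B q2) + vM) : Rˣ) : R) := by
      rw [hX'k, mul_add, ← Units.val_mul, ← Units.val_mul, hXmul, hXmul, e1, e2]
    rw [lemC _ hak1, lemC _ hak2, hδ1, hδ2]
    calc ((X (g + col B q + col B k + col B q2) : Rˣ) : R)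
        = (((X (g + col B q + col B k + col B q2) : Rˣ) : R) * ((X' k : Rˣ) : R))
            * (((X' k)⁻¹ : Rˣ) : R) := by
          rw [mul_assoc, Units.mul_inv, mul_one]
      _ = (((t ^ (Λ ((g + col B q + col B k + col B q2) + vP) vP)
            * X ((g + col B q + col B k + col B q2) + vP) : Rˣ) : R)
          + ((t ^ (Λ ((g + col B q + col B k + col B q2) + vM) vP)
            * X ((g + col B q + col B k + col B q2) + vM) : Rˣ) : R))
            * (((X' k)⁻¹ : Rˣ) : R) := by rw [hK]
      _ = _ := by
          rw [add_mul, ← Units.val_mul, ← Units.val_mul, e1, e2,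
            mul_assoc (t ^ (Λ (g + col B q + col B k + col B q2) vP)),
            mul_assoc (t ^ (Λ (g + col B q + col B k + col B q2) vM)),
            add_comm]
end

section
/- Let g ∈ ℤ^m with g_k = 0. Then the following identities hold in R: (a) X(g) = (X')^g; (b) X(g + Be_{k−2}) + X(g + Be_k + Be_{k−2}) = (X')^{g + B'e_{k−2}}; (c) X(g + Be_{k−1} + Be_k + Be_{k−2}) = (X')^{g + B'(e_{k−1} + e_{k−2})} + (X')^{g + B'(e_k + e_{k−1} + e_{k−2})}; (d) X(g + 2·Be_{k−2} + Be_{k−1} + Be_k) = (X')^{g + B'(2e_{k−2} + e_{k−1} + e_k)}. (These are the polynomial properties of the partition bijection between canonical submodules of the cyclic string modules τ_{k−2} → τ_{k−1} → τ_k → τ_{k−2} and τ_{k−2} → τ'_k → τ_{k−1} → τ_{k−2} arising from an internal triangle, where g plays the role of the index.) -/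
section Aux
variable {m : ℕ}

lemma aux_single_smul (c : ℤ) (j : Fin m) : c • stdE j = Pi.single j c := by
  funext i
  by_cases h : i = j <;>
    simp [stdE, Pi.single_apply, h]

lemma aux_Lexp (Λ : (Fin m → ℤ) →ₗ[ℤ] (Fin m → ℤ) →ₗ[ℤ] ℤ) (x y : Fin m → ℤ) :
    Λ x y = ∑ j, x j * Λ (stdE j) y := by
  have hx : x = ∑ j, x j • stdE j := by
    rw [show (∑ j, x j • stdE j) = ∑ j, Pi.single j (x j) from
      Finset.sum_congr rfl fun j _ => aux_single_smul (x j) j]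
    exact (Finset.univ_sum_single x).symm
  conv_lhs => rw [hx]
  rw [map_sum, LinearMap.sum_apply]
  exact Finset.sum_congr rfl fun j _ => by rw [map_smul]; simp

lemma aux_Lvv (Λ : (Fin m → ℤ) →ₗ[ℤ] (Fin m → ℤ) →ₗ[ℤ] ℤ)
    (hskew : ∀ g h, Λ g h = -Λ h g) (v : Fin m → ℤ) : Λ v v = 0 := by
  have := hskew v v; omega

lemma aux_sigma_k (a : Fin m → ℤ) (k : Fin m) (l : List (Fin m)) :
    ((l.map (fun i => if i = k then (0 : Fin m → ℤ) else a i • stdE i)).sum) k = 0 := by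
  induction l with
  | nil => rfl
  | cons i l ih =>
    rw [List.map_cons, List.sum_cons, Pi.add_apply, ih, add_zero]
    by_cases h : i = k
    · simp [h]
    · simp [h, stdE, Pi.single_apply, Ne.symm h]

lemma aux_sum_insert {S : Finset (Fin m)} {i : Fin m} (hini : i ∉ S)
    (hlt : ∀ j ∈ S, i < j) (w : Fin m → Fin m → ℤ) :
    ∑ p ∈ insert i S, ∑ q ∈ insert i S, (if p < q then w p q else 0)
      = (∑ q ∈ S, w i q) + ∑ p ∈ S, ∑ q ∈ S, (if p < q then w p q else 0) := by
  rw [Finset.sum_insert hini]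
  congr 1
  · rw [Finset.sum_insert hini, if_neg (lt_irrefl i), zero_add]
    exact Finset.sum_congr rfl fun q hq => if_pos (hlt q hq)
  · refine Finset.sum_congr rfl fun p hp => ?_
    rw [Finset.sum_insert hini, if_neg (asymm (hlt p hp)), zero_add]

lemma aux_L_sigma (Λ : (Fin m → ℤ) →ₗ[ℤ] (Fin m → ℤ) →ₗ[ℤ] ℤ) (v : Fin m → ℤ)
    (a : Fin m → ℤ) (k : Fin m) (l : List (Fin m)) (hnd : l.Nodup) :
    Λ v ((l.map (fun i => if i = k then (0 : Fin m → ℤ) else a i • stdE i)).sum)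
      = ∑ q ∈ l.toFinset, (if q = k then 0 else a q * Λ v (stdE q)) := by
  rw [map_list_sum (Λ v), List.map_map, ← List.sum_toFinset _ hnd]
  refine Finset.sum_congr rfl fun q hq => ?_
  simp only [Function.comp]
  by_cases h : q = k
  · simp [h]
  · rw [if_neg h, if_neg h, map_smul, smul_eq_mul]

end Aux

section Main
variable {m : ℕ} {R : Type*} [Ring R]

lemma aux_MAIN (t : Rˣ)
    (htc : ∀ (n : ℤ) (u v : Rˣ), u * (t ^ n * v) = t ^ n * (u * v))
    (Λ : (Fin m → ℤ) →ₗ[ℤ] (Fin m → ℤ) →ₗ[ℤ] ℤ)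
    (X : (Fin m → ℤ) → Rˣ) (hX0 : X 0 = 1)
    (hXmul : ∀ g h, X g * X h = t ^ (Λ g h) * X (g + h))
    (hXzpow : ∀ (n : ℤ) (v : Fin m → ℤ), X v ^ n = X (n • v))
    (k : Fin m) (vp : Fin m → ℤ) (X' : Fin m → Rˣ)
    (hX'ne : ∀ i, i ≠ k → X' i = X (stdE i))
    (a : Fin m → ℤ)
    (hcom : ∀ v, v k = 0 →
      X' k ^ (a k) * X v = t ^ (2 * a k * Λ vp v) * (X v * X' k ^ (a k))) :
    ∀ l : List (Fin m), l.Pairwise (· < ·) →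
      ((l.map fun i => X' i ^ a i).prod)
        = t ^ (∑ i ∈ l.toFinset, ∑ j ∈ l.toFinset, if i < j then
              (if i = k then 2 * a k * (a j * Λ vp (stdE j))
               else if j = k then 0 else a i * (a j * Λ (stdE i) (stdE j))) else 0)
          * (X ((l.map (fun i => if i = k then 0 else a i • stdE i)).sum)
             * X' k ^ (if k ∈ l then a k else 0)) := by
  intro l
  induction l with
  | nil => simp [hX0]
  | cons i l ih =>
    intro hs
    rw [List.pairwise_cons] at hs
    obtain ⟨hlt, hs'⟩ := hs
    have hnotin : i ∉ l := fun h => absurd (hlt i h) (lt_irrefl i)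
    have hnd : l.Nodup := hs'.nodup
    have hini : i ∉ l.toFinset := by simpa using hnotin
    have hIH := ih hs'
    rw [List.map_cons, List.prod_cons, List.toFinset_cons,
      aux_sum_insert hini (fun j hj => hlt j (List.mem_toFinset.mp hj)) _,
      List.map_cons, List.sum_cons]
    by_cases hik : i = k
    · subst hik
      rw [hIH, if_neg hnotin, zpow_zero, mul_one, if_pos (List.mem_cons_self (a := i) (l := l)),
        if_pos rfl, zero_add, htc]
      rw [hcom _ (aux_sigma_k a i l), ← mul_assoc, ← zpow_add]
      have he : ∑ q ∈ l.toFinset, (if i = i then 2 * a i * (a q * Λ vp (stdE q))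
            else if q = i then 0 else a i * (a q * Λ (stdE i) (stdE q)))
          = 2 * a i * Λ vp ((l.map (fun j => if j = i then (0:Fin m → ℤ)
              else a j • stdE j)).sum) := by
        rw [aux_L_sigma Λ vp a i l hnd, Finset.mul_sum]
        refine Finset.sum_congr rfl fun q hq => ?_
        have hqk : q ≠ i := fun h => hnotin (h ▸ List.mem_toFinset.mp hq)
        rw [if_pos rfl, if_neg hqk]
      rw [he, add_comm]
    · rw [hX'ne i hik, hXzpow, hIH, htc, ← mul_assoc (X (a i • stdE i)), hXmul,
        mul_assoc, ← mul_assoc (t ^ _), ← zpow_add, if_neg hik]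
      have hmem : (if k ∈ i :: l then a k else 0) = (if k ∈ l then a k else 0) := by
        simp only [List.mem_cons, (show ¬ k = i from Ne.symm hik), false_or]
      rw [hmem]
      have he : Λ (a i • stdE i) ((l.map (fun i => if i = k then (0:Fin m → ℤ)
            else a i • stdE i)).sum)
          = ∑ q ∈ l.toFinset, (if i = k then 2 * a k * (a q * Λ vp (stdE q))
              else if q = k then 0 else a i * (a q * Λ (stdE i) (stdE q))) := by
        rw [map_smul, LinearMap.smul_apply, smul_eq_mul,
          aux_L_sigma Λ (stdE i) a k l hnd, Finset.mul_sum]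
        refine Finset.sum_congr rfl fun q hq => ?_
        rw [if_neg hik]
        by_cases h : q = k <;> simp [h]
      rw [he, add_comm]

end Main

section Conj
variable {m : ℕ} {R : Type*} [Ring R]

lemma aux_sub_single (a : Fin m → ℤ) (k j : Fin m) :
    (a - a k • stdE k) j = if j = k then 0 else a j := by
  rw [Pi.sub_apply, aux_single_smul, Pi.single_apply]
  by_cases h : j = k <;> simp [h]

lemma aux_CONJ (t : Rˣ)
    (htc : ∀ (n : ℤ) (u v : Rˣ), u * (t ^ n * v) = t ^ n * (u * v))
    (Λ : (Fin m → ℤ) →ₗ[ℤ] (Fin m → ℤ) →ₗ[ℤ] ℤ)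
    (hΛskew : ∀ g h, Λ g h = -Λ h g)
    (X : (Fin m → ℤ) → Rˣ) (hX0 : X 0 = 1)
    (hXmul : ∀ g h, X g * X h = t ^ (Λ g h) * X (g + h))
    (hXzpow : ∀ (n : ℤ) (v : Fin m → ℤ), X v ^ n = X (n • v))
    (k : Fin m) (vp : Fin m → ℤ) (X' : Fin m → Rˣ)
    (hX'ne : ∀ i, i ≠ k → X' i = X (stdE i))
    (Lam' : Fin m → Fin m → ℤ)
    (hLam'skew : ∀ i j, Lam' i j = -Lam' j i)
    (hLam'nk : ∀ i j, i ≠ k → j ≠ k → Lam' i j = Λ (stdE i) (stdE j))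
    (hLam'k : ∀ i, i ≠ k → Lam' i k = Λ (stdE i) vp)
    (a : Fin m → ℤ)
    (hcom : ∀ v, v k = 0 →
      X' k ^ (a k) * X v = t ^ (2 * a k * Λ vp v) * (X v * X' k ^ (a k))) :
    XpPow t Lam' X' a
      = t ^ (-(a k) * Λ (a - a k • stdE k) vp)
        * (X (a - a k • stdE k) * X' k ^ (a k)) := by
  have h1 := aux_MAIN t htc Λ X hX0 hXmul hXzpow k vp X' hX'ne a hcom
    (List.finRange m) (List.pairwise_lt_finRange m)
  have hσ : ((List.finRange m).map (fun i => if i = k then (0 : Fin m → ℤ)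
        else a i • stdE i)).sum = a - a k • stdE k := by
    rw [← List.sum_toFinset _ (List.nodup_finRange m), List.toFinset_finRange]
    rw [show (∑ i, (if i = k then (0 : Fin m → ℤ) else a i • stdE i))
        = ∑ i, Pi.single i (if i = k then 0 else a i) from
      Finset.sum_congr rfl fun i _ => by
        by_cases h : i = k
        · rw [if_pos h, if_pos h]; simp
        · rw [if_neg h, if_neg h, aux_single_smul]]
    rw [Finset.univ_sum_single]
    funext j
    rw [aux_sub_single]
  rw [hσ, List.toFinset_finRange, if_pos (List.mem_finRange k)] at h1
  unfold XpPow
  rw [h1, ← mul_assoc, ← zpow_add]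
  congr 2
  -- exponent identity
  have hstep1 : -(∑ i : Fin m, ∑ j : Fin m, if i < j then a i * a j * Lam' i j else 0)
        + (∑ i : Fin m, ∑ j : Fin m, if i < j then
            (if i = k then 2 * a k * (a j * Λ vp (stdE j))
             else if j = k then 0 else a i * (a j * Λ (stdE i) (stdE j))) else 0)
      = ∑ i : Fin m, ∑ j : Fin m,
          ((if i < j then
            (if i = k then 2 * a k * (a j * Λ vp (stdE j))
             else if j = k then 0 else a i * (a j * Λ (stdE i) (stdE j))) else 0)
           - (if i < j then a i * a j * Lam' i j else 0)) := by
    rw [neg_add_eq_sub, ← Finset.sum_sub_distrib]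
    exact Finset.sum_congr rfl fun i _ => (Finset.sum_sub_distrib _ _).symm
  rw [hstep1]
  have hstep2 : ∀ (i j : Fin m),
      ((if i < j then
            (if i = k then 2 * a k * (a j * Λ vp (stdE j))
             else if j = k then 0 else a i * (a j * Λ (stdE i) (stdE j))) else 0)
           - (if i < j then a i * a j * Lam' i j else 0))
      = (if i = k ∧ k < j then -(a k) * (a j * Λ (stdE j) vp) else 0)
        + (if j = k ∧ i < k then -(a k) * (a i * Λ (stdE i) vp) else 0) := by
    intro i j
    by_cases hij : i < j
    · rw [if_pos hij, if_pos hij]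
      by_cases hik : i = k
      · have hjk : j ≠ k := by rw [← hik]; exact (ne_of_gt hij)
        rw [if_pos hik, if_pos ⟨hik, hik ▸ hij⟩, if_neg (fun h => hjk h.1), add_zero,
          hLam'skew i j, hik, hLam'k j hjk, hΛskew vp (stdE j)]
        ring
      · by_cases hjk : j = k
        · rw [if_neg hik, if_pos hjk, if_neg (fun h => hik h.1),
            if_pos ⟨hjk, hjk ▸ hij⟩, zero_add, hjk, hLam'k i hik]
          ring
        · rw [if_neg hik, if_neg hjk, if_neg (fun h => hik h.1),
            if_neg (fun h => hjk h.1), hLam'nk i j hik hjk]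
          ring
    · rw [if_neg hij, if_neg hij,
        if_neg (fun h : i = k ∧ k < j => hij (h.1 ▸ h.2)),
        if_neg (fun h : j = k ∧ i < k => hij (h.1 ▸ h.2))]
      ring
  rw [Finset.sum_congr rfl fun i _ => Finset.sum_congr rfl fun j _ => hstep2 i j]
  rw [Finset.sum_congr rfl fun i (_ : i ∈ Finset.univ) => Finset.sum_add_distrib,
    Finset.sum_add_distrib]
  have hSA : ∑ i : Fin m, ∑ j : Fin m,
        (if i = k ∧ k < j then -(a k) * (a j * Λ (stdE j) vp) else 0)
      = ∑ j : Fin m, (if k < j then -(a k) * (a j * Λ (stdE j) vp) else 0) := by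
    rw [Finset.sum_congr rfl fun i (_ : i ∈ Finset.univ) =>
      (show (∑ j : Fin m, if i = k ∧ k < j then -(a k) * (a j * Λ (stdE j) vp) else 0)
        = if i = k then (∑ j : Fin m, if k < j then -(a k) * (a j * Λ (stdE j) vp) else 0)
          else 0 from by
        by_cases h : i = k
        · rw [if_pos h]
          exact Finset.sum_congr rfl fun j _ => by
            by_cases h2 : k < j <;> simp [h, h2]
        · rw [if_neg h]
          exact Finset.sum_eq_zero fun j _ => by simp [h])]
    rw [Finset.sum_ite_eq' Finset.univ k
      (fun _ => ∑ j : Fin m, (if k < j then -(a k) * (a j * Λ (stdE j) vp) else 0))]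
    simp
  have hSB : ∑ i : Fin m, ∑ j : Fin m,
        (if j = k ∧ i < k then -(a k) * (a i * Λ (stdE i) vp) else 0)
      = ∑ i : Fin m, (if i < k then -(a k) * (a i * Λ (stdE i) vp) else 0) := by
    refine Finset.sum_congr rfl fun i _ => ?_
    by_cases h : i < k
    · rw [show (∑ j : Fin m, if j = k ∧ i < k then -(a k) * (a i * Λ (stdE i) vp) else 0)
          = ∑ j : Fin m, (if j = k then -(a k) * (a i * Λ (stdE i) vp) else 0) from
        Finset.sum_congr rfl fun j _ => by by_cases h2 : j = k <;> simp [h, h2]]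
      rw [Finset.sum_ite_eq' Finset.univ k (fun _ => -(a k) * (a i * Λ (stdE i) vp))]
      simp [h]
    · rw [if_neg h]
      exact Finset.sum_eq_zero fun j _ => by simp [h]
  rw [hSA, hSB, ← Finset.sum_add_distrib]
  rw [aux_Lexp Λ (a - a k • stdE k) vp, Finset.mul_sum]
  refine Finset.sum_congr rfl fun j _ => ?_
  rcases lt_trichotomy k j with h | h | h
  · rw [if_pos h, if_neg (asymm h), add_zero, aux_sub_single, if_neg (ne_of_gt h)]
  · rw [if_neg (h ▸ lt_irrefl k), if_neg (h ▸ lt_irrefl k), add_zero,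
      aux_sub_single, if_pos h.symm]
    ring
  · rw [if_neg (asymm h), if_pos h, zero_add, aux_sub_single, if_neg (ne_of_lt h)]

end Conj

theorem stmt15    {m : ℕ} (hm : 4 ≤ m) {R : Type*} [Ring R]
    (t : Rˣ) (ht : ∀ r : R, (t : R) * r = r * (t : R))
    (Λ : (Fin m → ℤ) →ₗ[ℤ] (Fin m → ℤ) →ₗ[ℤ] ℤ)
    (hΛskew : ∀ g h, Λ g h = -Λ h g)
    (X : (Fin m → ℤ) → Rˣ)
    (hX0 : X 0 = 1)
    (hXmul : ∀ g h, X g * X h = t ^ (Λ g h) * X (g + h))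
    (k : Fin m) (b : Fin m → ℤ) (hbkk : b k = 0)
    (hcompat : ∀ j, Λ (stdE j) b = if j = k then 1 else 0)
    (X' : Fin m → Rˣ)
    (hX'ne : ∀ i, i ≠ k → X' i = X (stdE i))
    (hX'k : (X' k : R) = (X (-stdE k + bPlus b) : R) + (X (-stdE k + bMinus b) : R))
    (Lam' : Fin m → Fin m → ℤ)
    (hLam'skew : ∀ i j, Lam' i j = -Lam' j i)
    (hLam'nk : ∀ i j, i ≠ k → j ≠ k → Lam' i j = Λ (stdE i) (stdE j))
    (hLam'k : ∀ i, i ≠ k → Lam' i k = Λ (stdE i) (-stdE k + bPlus b))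
    (p q r : Fin m)
    (hpq : p ≠ q) (hpr : p ≠ r) (hqr : q ≠ r)
    (hpk : p ≠ k) (hqk : q ≠ k) (hrk : r ≠ k)
    (B : Fin m → Fin m → ℤ)
    (hBb : ∀ i, B i k = b i)
    (hbval : b = (-2 : ℤ) • stdE q + stdE p + stdE r)
    (hBkq : B k q = 2) (hBkp : B k p = -1) (hBkr : B k r = -1)
    (hBk0 : ∀ j, j ≠ q → j ≠ p → j ≠ r → B k j = 0)
    (B' : Fin m → Fin m → ℤ)
    (hB' : ∀ i j, B' i j = if i = k ∨ j = k then -B i j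
      else B i j + max (B i k) 0 * B k j + B i k * max (-(B k j)) 0)
    (g : Fin m → ℤ) (hg : g k = 0) :
    ((X g : Rˣ) : R) = ((XpPow t Lam' X' g : Rˣ) : R)
    ∧ ((X (g + col B p) : Rˣ) : R) + ((X (g + col B k + col B p) : Rˣ) : R)
        = ((XpPow t Lam' X' (g + col B' p) : Rˣ) : R)
    ∧ ((X (g + col B q + col B k + col B p) : Rˣ) : R)
        = ((XpPow t Lam' X' (g + col B' q + col B' p) : Rˣ) : R)
          + ((XpPow t Lam' X' (g + col B' k + col B' q + col B' p) : Rˣ) : R)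
    ∧ ((X (g + (2 : ℤ) • col B p + col B q + col B k) : Rˣ) : R)
        = ((XpPow t Lam' X' (g + (2 : ℤ) • col B' p + col B' q + col B' k) : Rˣ) : R) := by
  classical
  set vp := -stdE k + bPlus b with hvp_def
  set vm := -stdE k + bMinus b with hvm_def
  -- t is central
  have hcommU : ∀ u : Rˣ, Commute t u := fun u => Units.ext (by
    rw [Units.val_mul, Units.val_mul]; exact ht u)
  have htc : ∀ (n : ℤ) (u v : Rˣ), u * (t ^ n * v) = t ^ n * (u * v) := by
    intro n u v
    rw [← mul_assoc, ← ((hcommU u).zpow_left n).eq, mul_assoc]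
  -- basic facts about X
  have hΛvv : ∀ v, Λ v v = 0 := aux_Lvv Λ hΛskew
  have hXinv : ∀ v, (X v)⁻¹ = X (-v) := by
    intro v
    have h : X v * X (-v) = 1 := by
      rw [hXmul v (-v)]
      have h0 : Λ v (-v) = 0 := by rw [map_neg, hΛvv, neg_zero]
      rw [h0, zpow_zero, one_mul, add_neg_cancel, hX0]
    exact (eq_inv_of_mul_eq_one_right h).symm
  have hXpowN : ∀ (n : ℕ) (v : Fin m → ℤ), X v ^ n = X ((n : ℤ) • v) := by
    intro n v
    induction n with
    | zero => simp [hX0]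
    | succ n ih =>
      rw [pow_succ, ih, hXmul]
      have h1 : Λ ((n : ℤ) • v) v = 0 := by rw [map_smul]; simp [hΛvv]
      rw [h1, zpow_zero, one_mul]
      congr 1
      push_cast
      rw [add_smul, one_smul]
  have hXzpow : ∀ (n : ℤ) (v : Fin m → ℤ), X v ^ n = X (n • v) := by
    intro n v
    cases n with
    | ofNat n => simpa using hXpowN n v
    | negSucc n =>
      rw [zpow_negSucc, hXpowN, hXinv, ← neg_smul]
      congr 1
  have hxb : ∀ x : Fin m → ℤ, Λ x b = x k := by
    intro x
    rw [aux_Lexp Λ x b]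
    calc ∑ j, x j * Λ (stdE j) b = ∑ j, (if j = k then x j else 0) :=
          Finset.sum_congr rfl fun j _ => by
            rw [hcompat j]; by_cases h : j = k <;> simp [h]
      _ = x k := by rw [Finset.sum_ite_eq' Finset.univ k x]; simp
  -- vp/vm facts
  have hvpm : vp = vm + b := by
    rw [hvp_def, hvm_def]
    funext i
    simp only [Pi.add_apply, Pi.neg_apply, bPlus, bMinus]
    omega
  have hvmk : vm k = -1 := by
    rw [hvm_def]
    simp [bMinus, stdE, Pi.single_eq_same, hbkk]
  have hΛvmvp : Λ vm vp = -1 := by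
    rw [hvpm, map_add, hΛvv, hxb, hvmk, zero_add]
  -- commutation
  have hswap2 : ∀ x y, X x * X y = t ^ (2 * Λ x y) * (X y * X x) := by
    intro x y
    rw [hXmul x y, hXmul y x, ← mul_assoc, ← zpow_add, add_comm x y]
    congr 2
    rw [hΛskew y x]; ring
  have COMM1 : ∀ v, v k = 0 → X' k * X v = t ^ (2 * Λ vp v) * (X v * X' k) := by
    intro v hv
    have e1 : 2 * Λ vm v = 2 * Λ vp v := by
      have h2 : Λ vp v = Λ vm v + Λ b v := by rw [hvpm, map_add, LinearMap.add_apply]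
      have h3 : Λ b v = 0 := by rw [hΛskew b v, hxb, hv, neg_zero]
      omega
    apply Units.ext
    calc ((X' k * X v : Rˣ) : R)
        = ((X vp : Rˣ) + (X vm : Rˣ)) * (X v : Rˣ) := by rw [Units.val_mul, hX'k]
      _ = ((X vp * X v : Rˣ) : R) + ((X vm * X v : Rˣ) : R) := by
          rw [add_mul, Units.val_mul, Units.val_mul]
      _ = ((t ^ (2 * Λ vp v) * (X v * X vp) : Rˣ) : R)
            + ((t ^ (2 * Λ vp v) * (X v * X vm) : Rˣ) : R) := by
          rw [hswap2 vp v, hswap2 vm v, e1]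
      _ = ((t ^ (2 * Λ vp v) : Rˣ) : R) * ((X v : Rˣ) * ((X vp : Rˣ) + (X vm : Rˣ))) := by
          simp only [Units.val_mul]
          rw [mul_add, mul_add]
      _ = ((t ^ (2 * Λ vp v) * (X v * X' k) : Rˣ) : R) := by
          rw [Units.val_mul, Units.val_mul, hX'k]
  have COMMN : ∀ v, v k = 0 → (X' k)⁻¹ * X v = t ^ (-(2 * Λ vp v)) * (X v * (X' k)⁻¹) := by
    intro v hv
    refine mul_left_cancel (a := X' k) ?_
    rw [mul_inv_cancel_left, htc, ← mul_assoc (X' k), COMM1 v hv, mul_assoc (t ^ (2 * Λ vp v)),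
      mul_inv_cancel_right, ← mul_assoc, ← zpow_add,
      show -(2 * Λ vp v) + 2 * Λ vp v = 0 from by ring, zpow_zero, one_mul]
  -- specialized hcom's
  have hcom_zero : ∀ (aa : Fin m → ℤ), aa k = 0 → ∀ v, v k = 0 →
      X' k ^ (aa k) * X v = t ^ (2 * aa k * Λ vp v) * (X v * X' k ^ (aa k)) := by
    intro aa hak v hv
    rw [hak]
    simp
  have hcom_one : ∀ (aa : Fin m → ℤ), aa k = 1 → ∀ v, v k = 0 →
      X' k ^ (aa k) * X v = t ^ (2 * aa k * Λ vp v) * (X v * X' k ^ (aa k)) := by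
    intro aa hak v hv
    rw [hak, zpow_one, show (2 : ℤ) * 1 * Λ vp v = 2 * Λ vp v from by ring]
    exact COMM1 v hv
  have hcom_negone : ∀ (aa : Fin m → ℤ), aa k = -1 → ∀ v, v k = 0 →
      X' k ^ (aa k) * X v = t ^ (2 * aa k * Λ vp v) * (X v * X' k ^ (aa k)) := by
    intro aa hak v hv
    rw [hak, zpow_neg_one, show (2 : ℤ) * (-1) * Λ vp v = -(2 * Λ vp v) from by ring]
    exact COMMN v hv
  have hCONJ : ∀ (a : Fin m → ℤ),
      (∀ v, v k = 0 → X' k ^ (a k) * X v = t ^ (2 * a k * Λ vp v) * (X v * X' k ^ (a k))) →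
      XpPow t Lam' X' a
        = t ^ (-(a k) * Λ (a - a k • stdE k) vp) * (X (a - a k • stdE k) * X' k ^ (a k)) :=
    fun a hcom => aux_CONJ t htc Λ hΛskew X hX0 hXmul hXzpow k vp X' hX'ne
      Lam' hLam'skew hLam'nk hLam'k a hcom
  have hF1 : ∀ v, v k = 0 → XpPow t Lam' X' v = X v := by
    intro v hv
    have h := hCONJ v (hcom_zero v hv)
    rw [hv] at h
    simpa using h
  -- entries of B and B'
  have hBkk : B k k = 0 := by rw [hBb k, hbkk]
  have hB'kp : B' k p = 1 := by rw [hB' k p, if_pos (Or.inl rfl), hBkp]; ring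
  have hB'kq : B' k q = -2 := by rw [hB' k q, if_pos (Or.inl rfl), hBkq]
  have hB'kk : B' k k = 0 := by rw [hB' k k, if_pos (Or.inl rfl), hBkk, neg_zero]
  have hB'ik : ∀ i, B' i k = -b i := by
    intro i
    rw [hB' i k, if_pos (Or.inr rfl), hBb]
  have hB'ip : ∀ i, i ≠ k → B' i p = B i p - max (b i) 0 + b i := by
    intro i hik
    rw [hB' i p, if_neg (by simp [hik, hpk]), hBkp, hBb, neg_neg,
      show max (1 : ℤ) 0 = 1 from by norm_num]
    omega
  have hB'iq : ∀ i, i ≠ k → B' i q = B i q + 2 * max (b i) 0 := by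
    intro i hik
    rw [hB' i q, if_neg (by simp [hik, hqk]), hBkq, hBb,
      show max (-2 : ℤ) 0 = 0 from by norm_num]
    omega
  refine ⟨?_, ?_, ?_, ?_⟩
  · -- part (a)
    rw [hF1 g hg]
  · -- part (b)
    have hak : (g + col B' p) k = 1 := by
      simp [Pi.add_apply, col, hB'kp, hg]
    have hCb := hCONJ (g + col B' p) (hcom_one _ hak)
    rw [hak, one_smul, neg_one_mul, zpow_one] at hCb
    set u := g + col B' p - stdE k with hu_def
    have huk : u k = 0 := by
      rw [hu_def]
      simp [Pi.sub_apply, Pi.add_apply, col, hB'kp, hg, stdE, Pi.single_eq_same]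
    have hvb3 : u + vp = g + col B k + col B p := by
      rw [hu_def, hvp_def]
      funext i
      simp only [Pi.add_apply, Pi.sub_apply, Pi.neg_apply, col, bPlus, stdE, Pi.single_apply]
      by_cases hik : i = k
      · rw [if_pos hik, hik, hB'kp, hBkk, hBkp, hg, hbkk]
        norm_num
      · rw [if_neg hik, hB'ip i hik, hBb i]
        omega
    have hvb4 : u + vm = g + col B p := by
      rw [hu_def, hvm_def]
      funext i
      simp only [Pi.add_apply, Pi.sub_apply, Pi.neg_apply, col, bMinus, stdE, Pi.single_apply]
      by_cases hik : i = k
      · rw [if_pos hik, hik, hB'kp, hBkp, hg, hbkk]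
        norm_num
      · rw [if_neg hik, hB'ip i hik]
        omega
    have hΛuvm : Λ u vm = Λ u vp := by
      have h1 : Λ u vp = Λ u vm + Λ u b := by rw [hvpm, map_add]
      rw [h1, hxb, huk, add_zero]
    have e1 : t ^ (-Λ u vp) * (X u * X vp) = X (g + col B k + col B p) := by
      rw [hXmul u vp, ← mul_assoc, ← zpow_add,
        show -Λ u vp + Λ u vp = 0 from by ring, zpow_zero, one_mul, hvb3]
    have e2 : t ^ (-Λ u vp) * (X u * X vm) = X (g + col B p) := by
      rw [hXmul u vm, hΛuvm, ← mul_assoc, ← zpow_add,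
        show -Λ u vp + Λ u vp = 0 from by ring, zpow_zero, one_mul, hvb4]
    rw [hCb, ← e2, ← e1]
    simp only [Units.val_mul]
    rw [hX'k, mul_add, mul_add]
    exact add_comm _ _
  · -- part (c)
    have ha1k : (g + col B' q + col B' p) k = -1 := by
      simp only [Pi.add_apply, col, hB'kq, hB'kp, hg]
      norm_num
    have ha2k : (g + col B' k + col B' q + col B' p) k = -1 := by
      simp only [Pi.add_apply, col, hB'kk, hB'kq, hB'kp, hg]
      norm_num
    have hwk : (g + col B q + col B k + col B p) k = 1 := by
      simp only [Pi.add_apply, col, hBkq, hBkk, hBkp, hg]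
      norm_num
    have hCc1 := hCONJ (g + col B' q + col B' p) (hcom_negone _ ha1k)
    rw [ha1k] at hCc1
    simp only [neg_neg, one_mul, neg_smul, one_smul, sub_neg_eq_add, zpow_neg_one] at hCc1
    have hCc2 := hCONJ (g + col B' k + col B' q + col B' p) (hcom_negone _ ha2k)
    rw [ha2k] at hCc2
    simp only [neg_neg, one_mul, neg_smul, one_smul, sub_neg_eq_add, zpow_neg_one] at hCc2
    set u1 := g + col B' q + col B' p + stdE k with hu1_def
    set u2 := g + col B' k + col B' q + col B' p + stdE k with hu2_def
    set w := g + col B q + col B k + col B p with hw_def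
    have hM1 : XpPow t Lam' X' (g + col B' q + col B' p) * X' k = t ^ (Λ u1 vp) * X u1 := by
      rw [hCc1, mul_assoc, mul_assoc, inv_mul_cancel, mul_one]
    have hM2 : XpPow t Lam' X' (g + col B' k + col B' q + col B' p) * X' k
        = t ^ (Λ u2 vp) * X u2 := by
      rw [hCc2, mul_assoc, mul_assoc, inv_mul_cancel, mul_one]
    have hvc3 : w + vp = u1 := by
      rw [hw_def, hu1_def, hvp_def]
      funext i
      simp only [Pi.add_apply, Pi.neg_apply, col, bPlus, stdE, Pi.single_apply]
      by_cases hik : i = k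
      · rw [if_pos hik, hik, hB'kq, hB'kp, hBkq, hBkk, hBkp, hg, hbkk]
        norm_num
      · rw [if_neg hik, hB'iq i hik, hB'ip i hik, hBb i]
        omega
    have hvc4 : w + vm = u2 := by
      rw [hw_def, hu2_def, hvm_def]
      funext i
      simp only [Pi.add_apply, Pi.neg_apply, col, bMinus, stdE, Pi.single_apply]
      by_cases hik : i = k
      · rw [if_pos hik, hik, hB'kk, hB'kq, hB'kp, hBkq, hBkk, hBkp, hg, hbkk]
        norm_num
      · rw [if_neg hik, hB'ik i, hB'iq i hik, hB'ip i hik, hBb i]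
        omega
    have hL1 : Λ w vp = Λ u1 vp := by
      have h2 : Λ u1 vp = Λ w vp + Λ vp vp := by rw [← hvc3, Λ.map_add w vp, LinearMap.add_apply]
      rw [h2, hΛvv, add_zero]
    have hL2 : Λ w vm = Λ u2 vp := by
      have h1 : Λ w vp = Λ w vm + w k := by rw [hvpm, (Λ w).map_add vm b, hxb]
      have h2 : Λ u2 vp = Λ w vp + Λ vm vp := by rw [← hvc4, Λ.map_add w vm, LinearMap.add_apply]
      rw [hwk] at h1
      omega
    have lhs_eq : ((X w : Rˣ) : R) * ((X' k : Rˣ) : R)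
        = ((t ^ (Λ u1 vp) * X u1 : Rˣ) : R) + ((t ^ (Λ u2 vp) * X u2 : Rˣ) : R) := by
      rw [hX'k, mul_add, ← Units.val_mul, ← Units.val_mul, hXmul w vp, hXmul w vm,
        hvc3, hvc4, hL1, hL2]
    calc ((X w : Rˣ) : R)
        = ((X w : Rˣ) : R) * ((X' k : Rˣ) : R) * (((X' k)⁻¹ : Rˣ) : R) :=
          (Units.mul_inv_cancel_right _ _).symm
      _ = (((t ^ (Λ u1 vp) * X u1 : Rˣ) : R) + ((t ^ (Λ u2 vp) * X u2 : Rˣ) : R))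
            * (((X' k)⁻¹ : Rˣ) : R) := by rw [lhs_eq]
      _ = ((XpPow t Lam' X' (g + col B' q + col B' p) * X' k : Rˣ) : R) * (((X' k)⁻¹ : Rˣ) : R)
            + ((XpPow t Lam' X' (g + col B' k + col B' q + col B' p) * X' k : Rˣ) : R)
              * (((X' k)⁻¹ : Rˣ) : R) := by rw [hM1, hM2, add_mul]
      _ = ((XpPow t Lam' X' (g + col B' q + col B' p) : Rˣ) : R)
            + ((XpPow t Lam' X' (g + col B' k + col B' q + col B' p) : Rˣ) : R) := by
          rw [Units.val_mul, Units.val_mul, Units.mul_inv_cancel_right,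
            Units.mul_inv_cancel_right]
  · -- part (d)
    have hwd : (g + (2 : ℤ) • col B p + col B q + col B k) k = 0 := by
      simp only [Pi.add_apply, Pi.smul_apply, smul_eq_mul, col, hg, hBkp, hBkq, hBkk]
      norm_num
    have hvd : g + (2 : ℤ) • col B' p + col B' q + col B' k
        = g + (2 : ℤ) • col B p + col B q + col B k := by
      funext i
      simp only [Pi.add_apply, Pi.smul_apply, smul_eq_mul, col]
      by_cases hik : i = k
      · rw [hik, hB'kp, hB'kq, hB'kk, hBkp, hBkq, hBkk]
        ring
      · rw [hB'ip i hik, hB'iq i hik, hB'ik i, hBb i]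
        ring
    rw [hvd, hF1 _ hwd]
end

section
/- For every g ∈ ℤ^m with g_k = 0, one has (X')^g = X(g) in R. -/
/-- pair sum -/
def pS {m : ℕ} (c : Fin m → Fin m → ℤ) : List (Fin m) → ℤ
  | [] => 0
  | i :: tl => (tl.map fun j => c i j).sum + pS c tl

lemma pS_sorted {m : ℕ} (c : Fin m → Fin m → ℤ) :
    ∀ L : List (Fin m), L.Pairwise (· < ·) →
      pS c L = (L.map (fun i => (L.map (fun j => if i < j then c i j else 0)).sum)).sum
  | [], _ => rfl
  | i :: tl, h => by
    obtain ⟨h1, h2⟩ := List.pairwise_cons.mp h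
    simp only [List.map_cons, List.sum_cons, pS]
    rw [pS_sorted c tl h2]
    have e1 : (tl.map (fun j => if i < j then c i j else 0)) = tl.map (fun j => c i j) := by
      apply List.map_congr_left
      intro j hj; simp [h1 j hj]
    have e2 : (tl.map (fun i' => (if i' < i then c i' i else 0) +
        (tl.map (fun j => if i' < j then c i' j else 0)).sum))
        = tl.map (fun i' => (tl.map (fun j => if i' < j then c i' j else 0)).sum) := by
      apply List.map_congr_left
      intro i' hi'
      have : ¬ i' < i := not_lt.mpr (le_of_lt (h1 i' hi'))
      simp [this]
    simp only [lt_irrefl, if_false, e1]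
    rw [e2]
    simp

lemma prod_X {m : ℕ} {R : Type*} [Ring R] (t : Rˣ)
    (hcomm : ∀ (z : ℤ) (u : Rˣ), t ^ z * u = u * t ^ z)
    (Λ : (Fin m → ℤ) →ₗ[ℤ] (Fin m → ℤ) →ₗ[ℤ] ℤ)
    (X : (Fin m → ℤ) → Rˣ)
    (hX0 : X 0 = 1)
    (hXmul : ∀ g h, X g * X h = t ^ (Λ g h) * X (g + h))
    (g : Fin m → ℤ) :
    ∀ L : List (Fin m),
      ((L.map (fun i => X (g i • stdE i))).prod : Rˣ)
        = t ^ (pS (fun i j => g i * g j * Λ (stdE i) (stdE j)) L)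
          * X ((L.map (fun i => g i • stdE i)).sum)
  | [] => by simp [pS, hX0]
  | i :: tl => by
    simp only [List.map_cons, List.prod_cons, List.sum_cons, pS]
    rw [prod_X t hcomm Λ X hX0 hXmul g tl, ← mul_assoc, ← hcomm, mul_assoc, hXmul,
      ← mul_assoc, ← zpow_add]
    congr 1
    have : Λ (g i • stdE i) ((tl.map (fun j => g j • stdE j)).sum)
        = (tl.map fun j => g i * g j * Λ (stdE i) (stdE j)).sum := by
      rw [map_smul, LinearMap.smul_apply, map_list_sum]
      rw [List.map_map, smul_eq_mul, ← List.sum_map_mul_left]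
      congr 1
      apply List.map_congr_left
      intro j hj
      simp only [Function.comp_apply, map_smul, smul_eq_mul]; ring
    rw [this]; ring

theorem stmt17    {m : ℕ} (hm : 1 ≤ m) {R : Type*} [Ring R]
    (t : Rˣ) (ht : ∀ r : R, (t : R) * r = r * (t : R))
    (Λ : (Fin m → ℤ) →ₗ[ℤ] (Fin m → ℤ) →ₗ[ℤ] ℤ)
    (hΛskew : ∀ g h, Λ g h = -Λ h g)
    (X : (Fin m → ℤ) → Rˣ)
    (hX0 : X 0 = 1)
    (hXmul : ∀ g h, X g * X h = t ^ (Λ g h) * X (g + h))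
    (k : Fin m) (b : Fin m → ℤ) (hbkk : b k = 0)
    (hcompat : ∀ j, Λ (stdE j) b = if j = k then 1 else 0)
    (X' : Fin m → Rˣ)
    (hX'ne : ∀ i, i ≠ k → X' i = X (stdE i))
    (hX'k : (X' k : R) = (X (-stdE k + bPlus b) : R) + (X (-stdE k + bMinus b) : R))
    (Lam' : Fin m → Fin m → ℤ)
    (hLam'skew : ∀ i j, Lam' i j = -Lam' j i)
    (hLam'nk : ∀ i j, i ≠ k → j ≠ k → Lam' i j = Λ (stdE i) (stdE j))
    (hLam'k : ∀ i, i ≠ k → Lam' i k = Λ (stdE i) (-stdE k + bPlus b))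
    (g : Fin m → ℤ) (hg : g k = 0) :
    ((XpPow t Lam' X' g : Rˣ) : R) = ((X g : Rˣ) : R) := by
  -- commuting t with units
  have hcomm : ∀ (z : ℤ) (u : Rˣ), t ^ z * u = u * t ^ z := by
    intro z u
    have hc : Commute t u := Units.ext (ht u)
    exact ((hc.zpow_left z)).eq
  have hΛ0 : ∀ h, Λ h h = 0 := fun h => by have := hΛskew h h; omega
  have hXinv : ∀ h, X (-h) = (X h)⁻¹ := by
    intro h
    have h1 : X h * X (-h) = 1 := by
      rw [hXmul]
      have : Λ h (-h) = 0 := by rw [map_neg, hΛ0]; ring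
      simp [this, hX0]
    exact eq_inv_of_mul_eq_one_right h1
  have hXzpow : ∀ (h : Fin m → ℤ) (n : ℤ), X h ^ n = X (n • h) := by
    intro h n
    induction n using Int.induction_on with
    | zero => simp [hX0]
    | succ n ih =>
        rw [zpow_add_one, ih, hXmul]
        have : Λ ((n : ℤ) • h) h = 0 := by
          rw [map_smul]; simp [hΛ0 h]
        rw [this]
        simp [add_smul]
    | pred n ih =>
        rw [zpow_sub_one, ih, ← hXinv, hXmul]
        have : Λ ((-n : ℤ) • h) (-h) = 0 := by
          rw [map_smul, map_neg]; simp [hΛ0 h]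
        rw [this]
        rw [zpow_zero, one_mul]
        congr 1
        rw [sub_smul, one_smul]
        abel
  have hfac : ∀ i, X' i ^ g i = X (g i • stdE i) := by
    intro i
    by_cases hik : i = k
    · subst hik; rw [hg]; simp [hX0.symm]
    · rw [hX'ne i hik, hXzpow]
  have hmapeq : ((List.finRange m).map (fun i => X' i ^ g i))
      = ((List.finRange m).map (fun i => X (g i • stdE i))) := by
    apply List.map_congr_left
    intro i _
    exact hfac i
  have hsum : ((List.finRange m).map (fun i => g i • stdE i)).sum = g := by
    have h1 : ((List.finRange m).map (fun i => g i • stdE i)).sum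
        = ∑ i : Fin m, g i • stdE i := by
      rw [Fin.sum_univ_def]
    rw [h1]
    funext j
    rw [Finset.sum_apply]
    simp [stdE, Pi.single_apply]
  have hSeq : (∑ i : Fin m, ∑ j : Fin m, if i < j then g i * g j * Lam' i j else 0)
      = ∑ i : Fin m, ∑ j : Fin m, if i < j then g i * g j * Λ (stdE i) (stdE j) else 0 := by
    apply Finset.sum_congr rfl
    intro i _
    apply Finset.sum_congr rfl
    intro j _
    by_cases hij : i < j
    · simp only [if_pos hij]
      by_cases hik : i = k
      · subst hik; rw [hg]; ring
      · by_cases hjk : j = k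
        · subst hjk; rw [hg]; ring
        · rw [hLam'nk i j hik hjk]
    · simp [hij]
  have hpS : pS (fun i j => g i * g j * Λ (stdE i) (stdE j)) (List.finRange m)
      = ∑ i : Fin m, ∑ j : Fin m, if i < j then g i * g j * Λ (stdE i) (stdE j) else 0 := by
    rw [pS_sorted _ _ (List.pairwise_lt_finRange m)]
    simp only [Fin.sum_univ_def]
  have hfinal : XpPow t Lam' X' g = X g := by
    rw [XpPow, hmapeq, prod_X t hcomm Λ X hX0 hXmul g (List.finRange m), hsum, hpS, hSeq,
      ← mul_assoc, ← zpow_add, neg_add_cancel, zpow_zero, one_mul]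
  rw [hfinal]
end
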